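/- arXiv:1111.4689 — 5 statements merged into one kernel-verified Lean document; each statement's English description precedes it below -/
import Mathlib

section
/- The linear-fractional distribution LF(h,g,m) has a linear-fractional probability generating function: for every sequence s = (s_1,s_2,...) with 0 ≤ s_j ≤ 1 for all j, the sum over all finitely supported vectors k of nonnegative integers of P(k)·∏_j s_j^{k_j} equals h_0 + (Σ_{j≥1} h_j s_j)/(1 + m − m Σ_{j≥1} g_j s_j). In particular (taking s_j = 1 for all j) the masses P(k) sum to 1. -/
open scoped ENNReal BigOperators
open Filter Topology

/-- The mass assigned to `k + e_i`:
`h_i · m^k (1+m)^{-k-1} · (k!/(k_1! k_2! ⋯)) · ∏_j g_j^{k_j}` with `k = Σ_j k_j`. -/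
noncomputable def lfTerm (h g : ℕ → ℝ≥0∞) (m : ℝ≥0∞) (k : ℕ →₀ ℕ) (i : ℕ) : ℝ≥0∞ :=
  h i * m ^ (∑ j ∈ k.support, k j) / (1 + m) ^ ((∑ j ∈ k.support, k j) + 1) *
    (Nat.multinomial k.support k : ℝ≥0∞) * ∏ j ∈ k.support, g j ^ k j

/-- The linear-fractional probability mass function `LF(h,g,m)` on finitely supported
vectors of nonnegative integers: `P(0) = h_0 = 1 - Σ_j h_j` and for `K ≠ 0`,
`P(K) = Σ_{i : K_i ≥ 1}` of the mass `lfTerm` assigned to the decomposition `K = k + e_i`. -/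
noncomputable def LFpmf (h g : ℕ → ℝ≥0∞) (m : ℝ≥0∞) (K : ℕ →₀ ℕ) : ℝ≥0∞ :=
  if K = 0 then 1 - ∑' j, h j
  else ∑' i, if K i ≠ 0 then lfTerm h g m (K - Finsupp.single i 1) i else 0

/-! Split `K = k + e_i` according to the coordinate `i` of the last added particle. The mass
`lfTerm h g m k i · sᴷ` factorises as `h_i s_i / (1 + m)` times the multinomial term of the weights
`x_j = m g_j s_j / (1 + m)`. In `ℝ≥0∞` the multinomial theorem holds for infinite sums, so summing
over `k` of degree `n` gives `(Σ_j x_j)^n`, and the geometric series over `n` gives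
`(1 - Σ_j x_j)⁻¹`, which turns into the linear-fractional denominator `1 + m - m Σ_j g_j s_j`.
Taking `s ≡ 1` and `Σ_j g_j = 1` shows that the masses sum to one. -/

theorem Finset.sum_pow_eq_sum_finsuppAntidiag {α R : Type*} [DecidableEq α] [CommSemiring R]
    (s : Finset α) (y : α → R) (n : ℕ) :
    (∑ i ∈ s, y i) ^ n
      = ∑ k ∈ s.finsuppAntidiag n, (k.multinomial : R) * k.prod fun i e => y i ^ e := by
  rw [Finset.sum_pow_eq_sum_piAntidiag, Finset.finsuppAntidiag, Finset.sum_map,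
    ← Finset.sum_attach]
  refine Finset.sum_congr rfl fun k _ => ?_
  rw [Finsupp.multinomial_eq_of_support_subset (Finset.filter_subset _ s),
    Finsupp.prod_of_support_subset _ (Finset.filter_subset _ s) _ (by simp)]
  rfl

namespace ENNReal

variable {α : Type*}

theorem tsum_pow_eq_tsum_multinomial (y : α → ℝ≥0∞) (n : ℕ) :
    (∑' i, y i) ^ n
      = ∑' k : α →₀ ℕ,
          if k.degree = n then (k.multinomial : ℝ≥0∞) * k.prod (fun i e => y i ^ e) else 0 := by
  classical
  set F : (α →₀ ℕ) → ℝ≥0∞ := fun k =>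
    if k.degree = n then (k.multinomial : ℝ≥0∞) * k.prod (fun i e => y i ^ e) else 0
  have finite_sum (s : Finset α) : (∑ i ∈ s, y i) ^ n = ∑ k ∈ s.finsuppAntidiag n, F k := by
    rw [Finset.sum_pow_eq_sum_finsuppAntidiag]
    refine Finset.sum_congr rfl fun k hk => ?_
    obtain ⟨hsum, hsupp⟩ := Finset.mem_finsuppAntidiag.mp hk
    have hdeg : k.degree = n := by
      rwa [Finsupp.degree_apply, Finset.sum_subset hsupp (by simp)]
    exact (if_pos hdeg).symm
  -- both sides are suprema of finite partial sums; the finite multinomial theorem over `s`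
  -- accounts exactly for the `k` of degree `n` supported in `s`
  rw [ENNReal.tsum_eq_iSup_sum, ENNReal.iSup_pow, ENNReal.tsum_eq_iSup_sum]
  simp_rw [finite_sum]
  refine le_antisymm (iSup_le fun s => le_iSup_of_le (s.finsuppAntidiag n) le_rfl)
    (iSup_le fun t => le_iSup_of_le (t.sup Finsupp.support) (Finset.sum_le_sum_of_ne_zero ?_))
  intro k hk hFk
  have hsupp : k.support ⊆ t.sup Finsupp.support := Finset.le_sup hk
  refine Finset.mem_finsuppAntidiag.mpr ⟨?_, hsupp⟩
  rw [← Finset.sum_subset hsupp (by simp)]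
  exact (ite_ne_right_iff.mp hFk).1

theorem tsum_multinomial_mul_prod_pow (y : α → ℝ≥0∞) :
    ∑' k : α →₀ ℕ, (k.multinomial : ℝ≥0∞) * k.prod (fun i e => y i ^ e) = (1 - ∑' i, y i)⁻¹ := by
  simp_rw [← ENNReal.tsum_geometric, tsum_pow_eq_tsum_multinomial]
  rw [ENNReal.tsum_comm]
  refine tsum_congr fun k => ?_
  simp_rw [eq_comm (a := k.degree)]
  exact (tsum_ite_eq k.degree (fun _ => (k.multinomial : ℝ≥0∞) * k.prod fun i e => y i ^ e)).symm

theorem inv_mul_inv_one_sub_div {b c : ℝ≥0∞} (hc₀ : c ≠ 0) (hc : c ≠ ∞) :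
    c⁻¹ * (1 - b / c)⁻¹ = (c - b)⁻¹ := by
  rw [← ENNReal.mul_inv (.inl hc₀) (.inl hc), ENNReal.mul_sub fun _ _ => hc, mul_one,
    ENNReal.mul_div_cancel hc₀ hc]

end ENNReal

theorem Finsupp.tsum_ite_apply_ne_zero_sub_single {α M : Type*} [AddCommMonoid M]
    [TopologicalSpace M] (φ : (α →₀ ℕ) → M) (i : α) :
    ∑' K : α →₀ ℕ, (if K i ≠ 0 then φ (K - Finsupp.single i 1) else 0) = ∑' k, φ k := by
  rw [← (add_left_injective (Finsupp.single i 1)).tsum_eq]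
  · simp
  · intro K hK
    have hKi : K i ≠ 0 := fun hKi => hK (if_neg (not_not.mpr hKi))
    exact ⟨K - Finsupp.single i 1,
      tsub_add_cancel_of_le (Finsupp.single_le_iff.mpr (Nat.one_le_iff_ne_zero.mpr hKi))⟩

theorem Finsupp.prod_pow_eq_mul_prod_sub_single {α M : Type*} [CommMonoid M] (x : α → M)
    {K : α →₀ ℕ} {i : α} (hK : K i ≠ 0) :
    K.prod (fun j e => x j ^ e) = x i * (K - Finsupp.single i 1).prod (fun j e => x j ^ e) := by
  conv_lhs => rw [← tsub_add_cancel_of_le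
    (Finsupp.single_le_iff.mpr (Nat.one_le_iff_ne_zero.mpr hK))]
  rw [Finsupp.prod_add_index' (fun _ => pow_zero _) (fun _ _ _ => pow_add _ _ _),
    Finsupp.prod_single_index (h := fun j e => x j ^ e) (pow_zero _), pow_one, mul_comm]

section LinearFractional

variable (h g : ℕ → ℝ≥0∞) (m : ℝ≥0∞) (s : ℕ → ℝ≥0∞)

theorem lfTerm_mul_prod_pow (k : ℕ →₀ ℕ) (i : ℕ) :
    lfTerm h g m k i * (s i * k.prod fun j e => s j ^ e)
      = h i * s i * ((1 + m)⁻¹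
          * (k.multinomial * k.prod fun j e => (m * (g j * s j) / (1 + m)) ^ e)) := by
  rw [lfTerm, div_eq_mul_inv, ENNReal.inv_pow]
  simp only [Finsupp.prod, div_eq_mul_inv, mul_pow, Finset.prod_mul_distrib,
    Finset.prod_pow_eq_pow_sum, Finsupp.multinomial_eq]
  ring

theorem LFpmf_mul_prod_pow (K : ℕ →₀ ℕ) :
    LFpmf h g m K * K.prod (fun j e => s j ^ e)
      = (if K = 0 then 1 - ∑' j, h j else 0)
        + ∑' i, if K i ≠ 0 then
            lfTerm h g m (K - Finsupp.single i 1) i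
              * (s i * (K - Finsupp.single i 1).prod fun j e => s j ^ e)
          else 0 := by
  by_cases hK : K = 0
  · subst hK
    simp [LFpmf]
  · rw [LFpmf, if_neg hK, if_neg hK, zero_add, ← ENNReal.tsum_mul_right]
    refine tsum_congr fun i => ?_
    split_ifs with hKi
    · rw [Finsupp.prod_pow_eq_mul_prod_sub_single s hKi]
    · exact zero_mul _

theorem tsum_LFpmf_mul_prod_pow (hm : m ≠ ∞) :
    ∑' K : ℕ →₀ ℕ, LFpmf h g m K * K.prod (fun j e => s j ^ e)
      = (1 - ∑' j, h j) + (∑' j, h j * s j) / (1 + m - m * ∑' j, g j * s j) := by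
  have h1m₀ : 1 + m ≠ 0 := by simp
  have h1m : 1 + m ≠ ∞ := ENNReal.add_ne_top.mpr ⟨ENNReal.one_ne_top, hm⟩
  have hG : ∑' j, m * (g j * s j) / (1 + m) = m * (∑' j, g j * s j) / (1 + m) := by
    simp_rw [div_eq_mul_inv, ENNReal.tsum_mul_right, ENNReal.tsum_mul_left]
  calc ∑' K : ℕ →₀ ℕ, LFpmf h g m K * K.prod (fun j e => s j ^ e)
      = (1 - ∑' j, h j) + ∑' (i : ℕ) (k : ℕ →₀ ℕ),
          lfTerm h g m k i * (s i * k.prod fun j e => s j ^ e) := by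
        simp_rw [LFpmf_mul_prod_pow, ENNReal.tsum_add, tsum_ite_eq]
        rw [ENNReal.tsum_comm]
        exact congrArg _ (tsum_congr fun i => Finsupp.tsum_ite_apply_ne_zero_sub_single
          (fun k => lfTerm h g m k i * (s i * k.prod fun j e => s j ^ e)) i)
    _ = (1 - ∑' j, h j)
          + ∑' i, h i * s i * ((1 + m)⁻¹ * (1 - m * (∑' j, g j * s j) / (1 + m))⁻¹) := by
        simp_rw [lfTerm_mul_prod_pow, ENNReal.tsum_mul_left,
          ENNReal.tsum_multinomial_mul_prod_pow, hG]
    _ = (1 - ∑' j, h j) + (∑' j, h j * s j) / (1 + m - m * ∑' j, g j * s j) := by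
        rw [ENNReal.tsum_mul_right, ENNReal.inv_mul_inv_one_sub_div h1m₀ h1m, div_eq_mul_inv]

end LinearFractional

theorem lf_generating_function_general
    (h g : ℕ → ℝ≥0∞) (m : ℝ≥0∞) (hm' : m ≠ ⊤)
    (hh : ∑' j, h j ≤ 1) (hg : ∑' j, g j = 1)
    (s : ℕ → ℝ≥0∞) :
    (∑' K : ℕ →₀ ℕ, LFpmf h g m K * ∏ j ∈ K.support, s j ^ K j)
      = (1 - ∑' j, h j) + (∑' j, h j * s j) / (1 + m - m * ∑' j, g j * s j) ∧
    (∑' K : ℕ →₀ ℕ, LFpmf h g m K) = 1 := by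
  refine ⟨tsum_LFpmf_mul_prod_pow h g m s hm', ?_⟩
  have total := tsum_LFpmf_mul_prod_pow h g m (fun _ => 1) hm'
  simp only [Finsupp.prod, one_pow, Finset.prod_const_one, mul_one] at total
  rw [total, hg, mul_one, ENNReal.add_sub_cancel_right hm', div_one, tsub_add_cancel_of_le hh]

theorem lf_generating_function
    (h g : ℕ → ℝ≥0∞) (m : ℝ≥0∞) (hm : 0 < m) (hm' : m ≠ ⊤)
    (hh : ∑' j, h j ≤ 1) (hg : ∑' j, g j = 1)
    (s : ℕ → ℝ≥0∞) (hs : ∀ j, s j ≤ 1) :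
    (∑' K : ℕ →₀ ℕ, LFpmf h g m K * ∏ j ∈ K.support, s j ^ K j)
      = (1 - ∑' j, h j) + (∑' j, h j * s j) / (1 + m - m * ∑' j, g j * s j) ∧
    (∑' K : ℕ →₀ ℕ, LFpmf h g m K) = 1 :=
  lf_generating_function_general h g m hm' hh hg s
end

section
/- (Extinction probability formula, equation (8).) For every n ≥ 1 and every i ≥ 1, the survival probability of the linear-fractional branching process started from a type-i particle satisfies 1 − φ_i^{(n)}(0) = (M^n 1ᵗ)_i / (1 + m^{(n)}), where 0 denotes the all-zeros sequence and m^{(n)} = m Σ_{k=0}^{n−1} g M^k 1ᵗ. Equivalently, H^{(n)} 1ᵗ = (1+m^{(n)})^{−1} M^n 1ᵗ, where H^{(n)} is the matrix with entries h_{ij}^{(n)} = (M^n)_{ij} − (m^{(n)}/(1+m^{(n)})) (M^n 1ᵗ)_i g_j^{(n)} and m^{(n)} g^{(n)} = m g (I + M + ⋯ + M^{n−1}). -/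
/-!
In the coordinates `q = 1 - s` the generating function becomes the linear fractional map
`ψ(q) = M q / (1 + m g q)`, and `ψ(v / c) = M v / (c + m g v)`; hence the `n`-th iterate is
`M^n q / (1 + m Σ_{k<n} g M^k q)`, which at `q = 1ᵗ` is the first identity.

For the second, `h^{(n)}_{ij} = (M^n)_{ij} - (M^n 1ᵗ)_i m^{(n)} g^{(n)}_j / (1 + m^{(n)})`, and
summing over `j` gives `(M^n 1ᵗ)_i (1 - m^{(n)} / (1 + m^{(n)}))`, provided these differences in
`ℝ≥0∞` are not truncated, i.e. `(M^n 1ᵗ)_i m^{(n)} g^{(n)}_j ≤ (1 + m^{(n)}) (M^n)_{ij}`. This is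
proved by induction on `n` from `M^{n+1} = H M^n + m (H 1ᵗ) g M^n`, using `M^n 1ᵗ ≤ 1 + m^{(n)}`.
-/

open scoped ENNReal BigOperators
open Filter Topology

/-- Entrywise product of countable nonnegative matrices. -/
noncomputable def matmul (A B : ℕ → ℕ → ℝ≥0∞) : ℕ → ℕ → ℝ≥0∞ :=
  fun i j => ∑' k, A i k * B k j

/-- Entrywise powers of a countable nonnegative matrix (`matpow A 0 = I`). -/
noncomputable def matpow (A : ℕ → ℕ → ℝ≥0∞) : ℕ → ℕ → ℕ → ℝ≥0∞
  | 0 => fun i j => if i = j then 1 else 0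
  | n + 1 => matmul A (matpow A n)

/-- The mean matrix `M = H + m H 1ᵗ g`, i.e. `m_{ij} = h_{ij} + m (Σ_l h_{il}) g_j`. -/
noncomputable def meanM (H : ℕ → ℕ → ℝ≥0∞) (g : ℕ → ℝ≥0∞) (m : ℝ≥0∞) : ℕ → ℕ → ℝ≥0∞ :=
  fun i j => H i j + m * (∑' l, H i l) * g j

/-- `φ_i(s) = h_{i0} + (Σ_j h_{ij} s_j)/(1 + m - m Σ_j g_j s_j)`. -/
noncomputable def phi (H : ℕ → ℕ → ℝ≥0∞) (g : ℕ → ℝ≥0∞) (m : ℝ≥0∞)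
    (i : ℕ) (s : ℕ → ℝ≥0∞) : ℝ≥0∞ :=
  (1 - ∑' j, H i j) + (∑' j, H i j * s j) / (1 + m - m * ∑' j, g j * s j)

/-- The iterates `φ_i^{(n)}`, with `φ^{(0)} = id` and `φ^{(n)} = φ ∘ φ^{(n-1)}`. -/
noncomputable def phiIter (H : ℕ → ℕ → ℝ≥0∞) (g : ℕ → ℝ≥0∞) (m : ℝ≥0∞) :
    ℕ → (ℕ → ℝ≥0∞) → ℕ → ℝ≥0∞
  | 0, s => s
  | n + 1, s => fun i => phi H g m i (phiIter H g m n s)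

/-- `m^{(n)} = m Σ_{k=0}^{n-1} g M^k 1ᵗ`. -/
noncomputable def mseq (H : ℕ → ℕ → ℝ≥0∞) (g : ℕ → ℝ≥0∞) (m : ℝ≥0∞) (n : ℕ) : ℝ≥0∞ :=
  m * ∑ k ∈ Finset.range n, ∑' i, g i * ∑' j, matpow (meanM H g m) k i j

/-- `g^{(n)}`, characterized by `m^{(n)} g^{(n)} = m g (I + M + ⋯ + M^{n-1})`. -/
noncomputable def gseq (H : ℕ → ℕ → ℝ≥0∞) (g : ℕ → ℝ≥0∞) (m : ℝ≥0∞) (n j : ℕ) : ℝ≥0∞ :=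
  (m * ∑ k ∈ Finset.range n, ∑' i, g i * matpow (meanM H g m) k i j) / mseq H g m n

/-- `h_{ij}^{(n)} = (M^n)_{ij} - (m^{(n)}/(1+m^{(n)})) (M^n 1ᵗ)_i g_j^{(n)}`. -/
noncomputable def Hseq (H : ℕ → ℕ → ℝ≥0∞) (g : ℕ → ℝ≥0∞) (m : ℝ≥0∞) (n i j : ℕ) : ℝ≥0∞ :=
  matpow (meanM H g m) n i j -
    mseq H g m n / (1 + mseq H g m n) * (∑' l, matpow (meanM H g m) n i l) * gseq H g m n j

namespace LinearFractional

open Finset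

lemma tsum_mul_one_sub {w q : ℕ → ℝ≥0∞} (hw : ∑' j, w j ≠ ⊤) (hq : ∀ j, q j ≤ 1) :
    ∑' j, w j * (1 - q j) = ∑' j, w j - ∑' j, w j * q j := by
  have hwq : ∀ j, w j * q j ≤ w j := fun j => mul_le_of_le_one_right' (hq j)
  rw [← ENNReal.tsum_sub (ne_top_of_le_ne_top hw (ENNReal.tsum_le_tsum hwq)) hwq]
  exact tsum_congr fun j => by
    rw [ENNReal.mul_sub fun _ _ => ENNReal.ne_top_of_tsum_ne_top hw j, mul_one]

lemma mul_add_mul_le_of_mul_le {t x y p q s : ℝ≥0∞} (ht₀ : t ≠ 0) (ht : t ≠ ⊤) (hx : x ≤ t)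
    (hp : y * s ≤ t * p) (hq : x * s ≤ t * q) : x * p + y * s ≤ t * p + y * q := by
  obtain ⟨N, hN⟩ := le_iff_exists_add.1 hp
  obtain ⟨N', hN'⟩ := le_iff_exists_add.1 hq
  rw [← ENNReal.mul_le_mul_iff_right ht₀ ht]
  calc t * (x * p + y * s) = x * (t * p) + t * y * s := by ring
    _ = (x * y * s + t * y * s) + x * N := by rw [hN]; ring
    _ ≤ (x * y * s + t * y * s) + (t * N + y * N') := by gcongr; exact le_add_right (by gcongr)
    _ = t * (t * p) + y * (t * q) := by rw [hN, hN']; ring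
    _ = t * (t * p + y * q) := by ring

variable (H : ℕ → ℕ → ℝ≥0∞) (g : ℕ → ℝ≥0∞) (m : ℝ≥0∞)

-- `M^n 1ᵗ`, `g M^n`, `g M^n 1ᵗ` and `m^{(n)} g^{(n)} = m g (I + M + ⋯ + M^{n-1})`.
noncomputable def powRowSum (n i : ℕ) : ℝ≥0∞ := ∑' j, matpow (meanM H g m) n i j

noncomputable def gPow (n j : ℕ) : ℝ≥0∞ := ∑' i, g i * matpow (meanM H g m) n i j

noncomputable def gPowSum (n : ℕ) : ℝ≥0∞ := ∑' i, g i * powRowSum H g m n i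

noncomputable def cumGPow (n j : ℕ) : ℝ≥0∞ := m * ∑ k ∈ range n, gPow H g m k j

variable {H g m}

lemma matpow_succ_apply (A : ℕ → ℕ → ℝ≥0∞) (n i j : ℕ) :
    matpow A (n + 1) i j = ∑' l, A i l * matpow A n l j := rfl

lemma tsum_meanM_mul (i : ℕ) (f : ℕ → ℝ≥0∞) :
    ∑' l, meanM H g m i l * f l
      = ∑' l, H i l * f l + m * (∑' l, H i l) * ∑' l, g l * f l := by
  rw [← ENNReal.tsum_mul_left, ← ENNReal.tsum_add]
  exact tsum_congr fun l => by rw [meanM]; ring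

lemma powRowSum_zero (i : ℕ) : powRowSum H g m 0 i = 1 := by
  simp [powRowSum, matpow]

lemma powRowSum_succ (n i : ℕ) :
    powRowSum H g m (n + 1) i = ∑' l, meanM H g m i l * powRowSum H g m n l := by
  simp_rw [powRowSum, matpow_succ_apply, ← ENNReal.tsum_mul_left]
  exact ENNReal.tsum_comm

lemma gPowSum_zero (hg : ∑' j, g j = 1) : gPowSum H g m 0 = 1 := by
  simp [gPowSum, powRowSum_zero, hg]

lemma tsum_gPow (n : ℕ) : ∑' j, gPow H g m n j = gPowSum H g m n := by
  simp_rw [gPow, gPowSum, powRowSum, ← ENNReal.tsum_mul_left]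
  exact ENNReal.tsum_comm

lemma mseq_eq_mul_sum_gPowSum (n : ℕ) :
    mseq H g m n = m * ∑ k ∈ range n, gPowSum H g m k := rfl

lemma mseq_succ (n : ℕ) : mseq H g m (n + 1) = mseq H g m n + m * gPowSum H g m n := by
  rw [mseq_eq_mul_sum_gPowSum, mseq_eq_mul_sum_gPowSum, sum_range_succ, mul_add]

lemma cumGPow_succ (n j : ℕ) :
    cumGPow H g m (n + 1) j = cumGPow H g m n j + m * gPow H g m n j := by
  rw [cumGPow, cumGPow, sum_range_succ, mul_add]

lemma tsum_cumGPow (n : ℕ) : ∑' j, cumGPow H g m n j = mseq H g m n := by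
  simp_rw [cumGPow, ENNReal.tsum_mul_left, Summable.tsum_finsetSum fun _ _ => ENNReal.summable,
    tsum_gPow]
  rfl

lemma tsum_meanM_le (hH : ∀ i, ∑' j, H i j ≤ 1) (hg : ∑' j, g j = 1) (i : ℕ) :
    ∑' l, meanM H g m i l ≤ 1 + m := by
  calc ∑' l, meanM H g m i l = ∑' l, H i l + m * (∑' l, H i l) * ∑' l, g l := by
        simpa using tsum_meanM_mul (H := H) (g := g) (m := m) i fun _ => 1
    _ ≤ 1 + m * 1 * 1 := by gcongr <;> simp [hH i, hg]
    _ = 1 + m := by ring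

lemma powRowSum_le_pow (hH : ∀ i, ∑' j, H i j ≤ 1) (hg : ∑' j, g j = 1) (n i : ℕ) :
    powRowSum H g m n i ≤ (1 + m) ^ n := by
  induction n generalizing i with
  | zero => simp [powRowSum_zero]
  | succ n ih =>
    calc powRowSum H g m (n + 1) i
        ≤ ∑' l, meanM H g m i l * (1 + m) ^ n := by
          rw [powRowSum_succ]; gcongr with l; exact ih l
      _ ≤ (1 + m) ^ (n + 1) := by
          rw [ENNReal.tsum_mul_right, pow_succ']; gcongr; exact tsum_meanM_le hH hg i

lemma gPowSum_le_pow (hH : ∀ i, ∑' j, H i j ≤ 1) (hg : ∑' j, g j = 1) (n : ℕ) :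
    gPowSum H g m n ≤ (1 + m) ^ n :=
  calc gPowSum H g m n ≤ ∑' i, g i * (1 + m) ^ n := by
        unfold gPowSum; gcongr with i; exact powRowSum_le_pow hH hg n i
    _ = (1 + m) ^ n := by rw [ENNReal.tsum_mul_right, hg, one_mul]

lemma mseq_ne_top (hH : ∀ i, ∑' j, H i j ≤ 1) (hg : ∑' j, g j = 1) (hm : m ≠ ⊤) (n : ℕ) :
    mseq H g m n ≠ ⊤ :=
  ENNReal.mul_ne_top hm <| ENNReal.sum_ne_top.2 fun k _ => ne_top_of_le_ne_top
    (ENNReal.pow_ne_top (ENNReal.add_ne_top.2 ⟨ENNReal.one_ne_top, hm⟩)) (gPowSum_le_pow hH hg k)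

lemma mseq_ne_zero (hg : ∑' j, g j = 1) (hm : m ≠ 0) {n : ℕ} (hn : 1 ≤ n) :
    mseq H g m n ≠ 0 := by
  refine mul_ne_zero hm (ne_of_gt ?_)
  calc (0 : ℝ≥0∞) < gPowSum H g m 0 := by rw [gPowSum_zero hg]; exact one_pos
    _ ≤ ∑ k ∈ range n, gPowSum H g m k := single_le_sum (fun _ _ => zero_le) (mem_range.2 hn)

lemma powRowSum_le_one_add_mseq (hH : ∀ i, ∑' j, H i j ≤ 1) (n i : ℕ) :
    powRowSum H g m n i ≤ 1 + mseq H g m n := by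
  induction n generalizing i with
  | zero => simp [powRowSum_zero, mseq]
  | succ n ih =>
    calc powRowSum H g m (n + 1) i
        = ∑' l, H i l * powRowSum H g m n l + m * (∑' l, H i l) * gPowSum H g m n := by
          rw [powRowSum_succ, tsum_meanM_mul]; rfl
      _ ≤ ∑' l, H i l * (1 + mseq H g m n) + m * 1 * gPowSum H g m n := by
          gcongr with l
          · exact ih l
          · exact hH i
      _ ≤ 1 * (1 + mseq H g m n) + m * gPowSum H g m n := by
          rw [ENNReal.tsum_mul_right, mul_one]; gcongr; exact hH i
      _ = 1 + mseq H g m (n + 1) := by rw [mseq_succ]; ring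

lemma phi_one_sub (hH : ∀ i, ∑' j, H i j ≤ 1) (hg : ∑' j, g j = 1) (hm : m ≠ ⊤)
    {q : ℕ → ℝ≥0∞} (hq : ∀ j, q j ≤ 1) (i : ℕ) :
    phi H g m i (fun j => 1 - q j)
      = 1 - (∑' j, meanM H g m i j * q j) / (1 + m * ∑' j, g j * q j) := by
  have hWU : ∑' j, H i j * q j ≤ ∑' j, H i j :=
    ENNReal.tsum_le_tsum fun j => mul_le_of_le_one_right' (hq j)
  have hG : ∑' j, g j * q j ≤ 1 :=
    hg ▸ ENNReal.tsum_le_tsum fun j => mul_le_of_le_one_right' (hq j)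
  rw [phi, tsum_mul_one_sub (ne_top_of_le_ne_top ENNReal.one_ne_top (hH i)) hq,
    tsum_mul_one_sub (by simp [hg]) hq, hg, tsum_meanM_mul]
  have hU := hH i
  generalize ∑' j, H i j = U at *
  generalize ∑' j, H i j * q j = W at *
  generalize ∑' j, g j * q j = G at *
  have hGtop : G ≠ ⊤ := ne_top_of_le_ne_top ENNReal.one_ne_top hG
  have hden : 1 + m - m * (1 - G) = 1 + m * G := by
    refine ENNReal.sub_eq_of_eq_add (by finiteness) ?_
    rw [add_assoc, ← mul_add, add_tsub_cancel_of_le hG, mul_one]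
  have hnum : W + m * U * G ≤ U * (1 + m * G) := by
    rw [mul_add, mul_one]; exact add_le_add hWU (le_of_eq (by ring))
  rw [hden]
  refine ENNReal.eq_sub_of_add_eq (ne_top_of_le_ne_top (ne_top_of_le_ne_top
    ENNReal.one_ne_top hU) (ENNReal.div_le_of_le_mul hnum)) ?_
  rw [add_assoc, ← ENNReal.add_div, ← add_assoc, tsub_add_cancel_of_le hWU,
    show U + m * U * G = U * (1 + m * G) by ring, ENNReal.mul_div_cancel_right (by simp)
    (by finiteness), tsub_add_cancel_of_le hU]

lemma powRowSum_div_le_one (hH : ∀ i, ∑' j, H i j ≤ 1) (n i : ℕ) :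
    powRowSum H g m n i / (1 + mseq H g m n) ≤ 1 :=
  ENNReal.div_le_of_le_mul ((one_mul _).trans_ge (powRowSum_le_one_add_mseq hH n i))

lemma phiIter_zero_eq (hH : ∀ i, ∑' j, H i j ≤ 1) (hg : ∑' j, g j = 1) (hm : m ≠ ⊤) (n i : ℕ) :
    phiIter H g m n (fun _ => 0) i = 1 - powRowSum H g m n i / (1 + mseq H g m n) := by
  induction n generalizing i with
  | zero => simp [phiIter, powRowSum_zero, mseq]
  | succ n ih =>
    set T := 1 + mseq H g m n
    have hT : T ≠ ⊤ := by simp [T, mseq_ne_top hH hg hm n]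
    have hMq : ∑' j, meanM H g m i j * (powRowSum H g m n j / T)
        = powRowSum H g m (n + 1) i / T := by
      simp_rw [div_eq_mul_inv, ← mul_assoc, ENNReal.tsum_mul_right, ← powRowSum_succ]
    have hgq : 1 + m * ∑' j, g j * (powRowSum H g m n j / T)
        = (1 + mseq H g m (n + 1)) / T := by
      simp_rw [div_eq_mul_inv, ← mul_assoc, ENNReal.tsum_mul_right]
      rw [mseq_succ, ← add_assoc, add_mul, ENNReal.mul_inv_cancel (by simp [T]) hT, mul_assoc]
      rfl
    change phi H g m i (phiIter H g m n fun _ => 0) = _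
    rw [funext ih, phi_one_sub hH hg hm (powRowSum_div_le_one hH n), hMq, hgq,
      div_eq_mul_inv _ T, div_eq_mul_inv _ T,
      ENNReal.mul_div_mul_right _ _ (by simpa using hT) (by simp [T])]

lemma powRowSum_mul_gPow_add_le (hH : ∀ i, ∑' j, H i j ≤ 1) (hg : ∑' j, g j = 1) (hm : m ≠ ⊤)
    {n : ℕ} (ih : ∀ l j, powRowSum H g m n l * cumGPow H g m n j
      ≤ (1 + mseq H g m n) * matpow (meanM H g m) n l j) (l j : ℕ) :
    powRowSum H g m n l * gPow H g m n j + gPowSum H g m n * cumGPow H g m n j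
      ≤ (1 + mseq H g m n) * gPow H g m n j + gPowSum H g m n * matpow (meanM H g m) n l j := by
  simp_rw [gPow, gPowSum, ← ENNReal.tsum_mul_left, ← ENNReal.tsum_mul_right, ← ENNReal.tsum_add]
  refine ENNReal.tsum_le_tsum fun k => ?_
  have := mul_add_mul_le_of_mul_le (by simp) (by simp [mseq_ne_top hH hg hm n])
    (powRowSum_le_one_add_mseq hH n l) (ih k j) (ih l j)
  calc _ = g k * (powRowSum H g m n l * matpow (meanM H g m) n k j
        + powRowSum H g m n k * cumGPow H g m n j) := by ring
    _ ≤ g k * ((1 + mseq H g m n) * matpow (meanM H g m) n k j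
        + powRowSum H g m n k * matpow (meanM H g m) n l j) := by gcongr
    _ = _ := by ring

/-- The entries of `H^{(n)}` are genuine differences, not truncated ones. -/
lemma powRowSum_mul_cumGPow_le (hH : ∀ i, ∑' j, H i j ≤ 1) (hg : ∑' j, g j = 1) (hm : m ≠ ⊤)
    (n i j : ℕ) :
    powRowSum H g m n i * cumGPow H g m n j
      ≤ (1 + mseq H g m n) * matpow (meanM H g m) n i j := by
  induction n generalizing i j with
  | zero => simp [cumGPow]
  | succ n ih =>
    have hB := powRowSum_mul_gPow_add_le hH hg hm ih
    rw [powRowSum_succ, matpow_succ_apply, tsum_meanM_mul, tsum_meanM_mul, cumGPow_succ,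
      mseq_succ]
    change (_ + _ * gPowSum H g m n) * _ ≤ _ * (_ + _ * gPow H g m n j)
    set T := 1 + mseq H g m n
    set HR := ∑' l, H i l * powRowSum H g m n l
    set HP := ∑' l, H i l * matpow (meanM H g m) n l j
    set U := ∑' l, H i l
    set A := gPowSum H g m n
    set a := gPow H g m n j
    set σ := cumGPow H g m n j
    have h₁ : HR * σ ≤ T * HP := by
      simp_rw [HR, HP, ← ENNReal.tsum_mul_right, ← ENNReal.tsum_mul_left, mul_assoc]
      exact ENNReal.tsum_le_tsum fun l =>
        (mul_le_mul_right (ih l j) _).trans_eq (mul_left_comm _ _ _)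
    have h₂ : HR * a + U * (A * σ) ≤ T * (U * a) + A * HP := by
      have := ENNReal.tsum_le_tsum fun l => mul_le_mul_right (hB l j) (H i l)
      simp_rw [mul_add, ENNReal.tsum_add] at this
      simpa [HR, HP, U, ← ENNReal.tsum_mul_right, ← ENNReal.tsum_mul_left, mul_assoc,
        mul_left_comm] using this
    calc (HR + m * U * A) * (σ + m * a)
        = HR * σ + m * (HR * a + U * (A * σ)) + m * m * U * A * a := by ring
      _ ≤ T * HP + m * (T * (U * a) + A * HP) + m * m * U * A * a := by gcongr
      _ = (1 + (mseq H g m n + m * A)) * (HP + m * U * a) := by ring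

lemma Hseq_eq {n : ℕ} (h₀ : mseq H g m n ≠ 0) (h : mseq H g m n ≠ ⊤) (i j : ℕ) :
    Hseq H g m n i j = matpow (meanM H g m) n i j
      - powRowSum H g m n i * cumGPow H g m n j / (1 + mseq H g m n) := by
  change _ - _ / _ * powRowSum H g m n i * (cumGPow H g m n j / mseq H g m n) = _
  congr 1
  simp_rw [div_eq_mul_inv]
  calc _ = mseq H g m n * (mseq H g m n)⁻¹ * (powRowSum H g m n i * cumGPow H g m n j
        * (1 + mseq H g m n)⁻¹) := by ring
    _ = _ := by rw [ENNReal.mul_inv_cancel h₀ h, one_mul]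

lemma tsum_Hseq (hH : ∀ i, ∑' j, H i j ≤ 1) (hg : ∑' j, g j = 1) (hm : m ≠ ⊤) {n : ℕ}
    (h₀ : mseq H g m n ≠ 0) (i : ℕ) :
    ∑' j, Hseq H g m n i j = powRowSum H g m n i / (1 + mseq H g m n) := by
  have h := mseq_ne_top hH hg hm n
  have hT : 1 + mseq H g m n ≠ ⊤ := by simp [h]
  have hR : powRowSum H g m n i / (1 + mseq H g m n) ≠ ⊤ :=
    ENNReal.div_ne_top (ne_top_of_le_ne_top hT (powRowSum_le_one_add_mseq hH n i)) (by simp)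
  have hle : ∀ j, powRowSum H g m n i * cumGPow H g m n j / (1 + mseq H g m n)
      ≤ matpow (meanM H g m) n i j := fun j =>
    ENNReal.div_le_of_le_mul ((powRowSum_mul_cumGPow_le hH hg hm n i j).trans_eq (mul_comm _ _))
  have hsum : ∑' j, powRowSum H g m n i * cumGPow H g m n j / (1 + mseq H g m n)
      = powRowSum H g m n i / (1 + mseq H g m n) * mseq H g m n := by
    calc _ = ∑' j, powRowSum H g m n i / (1 + mseq H g m n) * cumGPow H g m n j :=
          tsum_congr fun j => by simp_rw [div_eq_mul_inv]; ring
      _ = _ := by rw [ENNReal.tsum_mul_left, tsum_cumGPow]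
  simp_rw [Hseq_eq h₀ h]
  rw [ENNReal.tsum_sub (hsum ▸ ENNReal.mul_ne_top hR h) hle, hsum]
  refine ENNReal.sub_eq_of_eq_add (ENNReal.mul_ne_top hR h) ?_
  rw [← mul_one_add, ENNReal.div_mul_cancel (by simp) hT]
  rfl

end LinearFractional

theorem lf_survival_probability_formula
    (H : ℕ → ℕ → ℝ≥0∞) (g : ℕ → ℝ≥0∞) (m : ℝ≥0∞)
    (hH : ∀ i, ∑' j, H i j ≤ 1) (hg : ∑' j, g j = 1) (hm : 0 < m) (hm' : m ≠ ⊤) :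
    ∀ n : ℕ, 1 ≤ n → ∀ i : ℕ,
      1 - phiIter H g m n (fun _ => 0) i
        = (∑' j, matpow (meanM H g m) n i j) / (1 + mseq H g m n) ∧
      (∑' j, Hseq H g m n i j)
        = (∑' j, matpow (meanM H g m) n i j) / (1 + mseq H g m n) := by
  open LinearFractional in
  intro n hn i
  refine ⟨?_, tsum_Hseq hH hg hm' (mseq_ne_zero hg hm.ne' hn) i⟩
  rw [phiIter_zero_eq hH hg hm' n i,
    ENNReal.sub_sub_cancel ENNReal.one_ne_top (powRowSum_div_le_one hH n i)]
  rfl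
end

section
/- (Lemma 1, divergence part.) Suppose H has no zero rows (for every i there is j with h_{ij} > 0) and there are no phantom types (for every j there is n ≥ 0 with (g H^n)_j > 0). If s > 0 satisfies m f(s) ≥ 1 (including the case f(s) = ∞), then Σ_{n≥0} s^n (M^n)_{ij} = ∞ for every pair i,j. -/
open scoped ENNReal BigOperators
open Filter Topology

/-- `d_n = g H^n 1ᵗ`. -/
noncomputable def dseq (H : ℕ → ℕ → ℝ≥0∞) (g : ℕ → ℝ≥0∞) (n : ℕ) : ℝ≥0∞ :=
  ∑' i, g i * ∑' j, matpow H n i j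

/-- `f(s) = Σ_{n≥1} d_n s^n`. -/
noncomputable def fgen (H : ℕ → ℕ → ℝ≥0∞) (g : ℕ → ℝ≥0∞) (s : ℝ≥0∞) : ℝ≥0∞ :=
  ∑' n : ℕ, dseq H g (n + 1) * s ^ (n + 1)

/-!
Write `M = H + x yᵗ` with `x_i = Σ_l h_{il}` and `y = m g`. Splitting a path of `M` at its first
step through the rank-one part gives the renewal inequality `w_{n+1} ≥ Σ_{k+l=n} a_k w_l` for
`w_n = y M^n x` and `a_k = y H^k x = m d_{k+1}`. Weighting by `s^{n+1}` and summing yields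
`W ≥ w_0 + m f(s) W` for `W = Σ s^n w_n`, so `W = ∞` as soon as `m f(s) ≥ 1` (and `w_0 > 0`).
Every entry of the resolvent dominates a multiple of `W`: `(M^{n+r+2})_{ij} ≥ x_i (y H^r)_j w_n`,
and both factors are positive because `H` has no zero rows and `j` is not phantom.
-/

open Finset

noncomputable def mulVec (A : ℕ → ℕ → ℝ≥0∞) (v : ℕ → ℝ≥0∞) (i : ℕ) : ℝ≥0∞ :=
  ∑' k, A i k * v k

noncomputable def dot (u v : ℕ → ℝ≥0∞) : ℝ≥0∞ :=
  ∑' i, u i * v i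

theorem ENNReal.tsum_mul_tsum_eq_tsum_sum_antidiagonal (f g : ℕ → ℝ≥0∞) :
    (∑' n, f n) * ∑' n, g n = ∑' n, ∑ kl ∈ antidiagonal n, f kl.1 * g kl.2 := by
  calc (∑' n, f n) * ∑' n, g n = ∑' p : ℕ × ℕ, f p.1 * g p.2 := by
        rw [ENNReal.tsum_prod (f := fun k l => f k * g l), ← ENNReal.tsum_mul_right]
        exact tsum_congr fun k => ENNReal.tsum_mul_left.symm
    _ = ∑' x : Σ n : ℕ, antidiagonal n, f (x.2 : ℕ × ℕ).1 * g (x.2 : ℕ × ℕ).2 :=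
        (HasAntidiagonal.sigmaAntidiagonalEquivProd.tsum_eq (fun p => f p.1 * g p.2)).symm
    _ = ∑' n, ∑ kl ∈ antidiagonal n, f kl.1 * g kl.2 := by
        rw [ENNReal.tsum_sigma']
        exact tsum_congr fun n => Finset.tsum_subtype _ (fun kl : ℕ × ℕ => f kl.1 * g kl.2)

theorem ENNReal.sum_tsum_mul_mul {ι : Type*} (s : Finset ι) (w : ℕ → ℝ≥0∞) (f : ι → ℕ → ℝ≥0∞)
    (c : ι → ℝ≥0∞) :
    ∑ p ∈ s, (∑' l, w l * f p l) * c p = ∑' l, w l * ∑ p ∈ s, f p l * c p := by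
  simp_rw [← ENNReal.tsum_mul_right, Finset.mul_sum, mul_assoc]
  exact (Summable.tsum_finsetSum fun _ _ => ENNReal.summable).symm

theorem ENNReal.tsum_pow_mul_eq_top_of_renewal {a w : ℕ → ℝ≥0∞} {s : ℝ≥0∞}
    (hw : ∀ n, ∑ kl ∈ antidiagonal n, a kl.1 * w kl.2 ≤ w (n + 1)) (hw0 : w 0 ≠ 0)
    (ha : 1 ≤ ∑' k, a k * s ^ (k + 1)) :
    ∑' n, s ^ n * w n = ⊤ := by
  set W := ∑' n, s ^ n * w n
  by_contra hW
  have htail : W ≤ ∑' n, s ^ (n + 1) * w (n + 1) :=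
    calc W ≤ (∑' k, a k * s ^ (k + 1)) * W := le_mul_of_one_le_left' ha
      _ = ∑' n, ∑ kl ∈ antidiagonal n, a kl.1 * s ^ (kl.1 + 1) * (s ^ kl.2 * w kl.2) :=
        ENNReal.tsum_mul_tsum_eq_tsum_sum_antidiagonal _ _
      _ = ∑' n, s ^ (n + 1) * ∑ kl ∈ antidiagonal n, a kl.1 * w kl.2 := by
        refine tsum_congr fun n => ?_
        rw [Finset.mul_sum]
        refine Finset.sum_congr rfl fun kl hkl => ?_
        rw [← HasAntidiagonal.mem_antidiagonal.mp hkl]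
        ring
      _ ≤ ∑' n, s ^ (n + 1) * w (n + 1) := ENNReal.tsum_le_tsum fun n => by gcongr; exact hw n
  have hw0_le : w 0 + W ≤ 0 + W := by
    calc w 0 + W ≤ s ^ 0 * w 0 + ∑' n, s ^ (n + 1) * w (n + 1) := by
          simpa using add_le_add_right htail (w 0)
      _ = 0 + W := by
          rw [zero_add]; exact (tsum_eq_zero_add' (f := fun n => s ^ n * w n) ENNReal.summable).symm
  exact hw0 (nonpos_iff_eq_zero.mp (ENNReal.le_of_add_le_add_right hW hw0_le))

section MulVec

variable (A : ℕ → ℕ → ℝ≥0∞) (u v : ℕ → ℝ≥0∞)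

theorem mulVec_matmul (B : ℕ → ℕ → ℝ≥0∞) : mulVec (matmul A B) v = mulVec A (mulVec B v) := by
  funext i
  simp only [mulVec, matmul, ← ENNReal.tsum_mul_right, ← ENNReal.tsum_mul_left, mul_assoc]
  exact ENNReal.tsum_comm

theorem mulVec_matpow_zero : mulVec (matpow A 0) v = v := by
  funext i
  simp [mulVec, matpow, ite_mul, eq_comm (a := i)]

theorem mulVec_matpow_succ (n : ℕ) :
    mulVec (matpow A (n + 1)) v = mulVec A (mulVec (matpow A n) v) :=
  mulVec_matmul _ _ _

theorem mulVec_matpow_add (a b : ℕ) :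
    mulVec (matpow A (a + b)) v = mulVec (matpow A a) (mulVec (matpow A b) v) := by
  induction a with
  | zero => rw [zero_add, mulVec_matpow_zero]
  | succ a ih => rw [Nat.add_right_comm, mulVec_matpow_succ, ih, mulVec_matpow_succ]

theorem mulVec_matpow_succ' (n : ℕ) :
    mulVec (matpow A (n + 1)) v = mulVec (matpow A n) (mulVec A v) := by
  rw [mulVec_matpow_add, mulVec_matpow_succ, mulVec_matpow_zero]

theorem mulVec_matpow_single (n i j : ℕ) :
    mulVec (matpow A n) (Pi.single j 1) i = matpow A n i j := by
  simp [mulVec, Pi.single_apply]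

theorem mulVec_smul (r : ℝ≥0∞) : mulVec A (r • v) = r • mulVec A v := by
  funext i
  simp only [mulVec, Pi.smul_apply, smul_eq_mul, ← ENNReal.tsum_mul_left, mul_left_comm]

theorem dot_smul_left (r : ℝ≥0∞) : dot (r • u) v = r * dot u v := by
  simp only [dot, Pi.smul_apply, smul_eq_mul, ← ENNReal.tsum_mul_left, mul_assoc]

theorem dot_smul_right (r : ℝ≥0∞) : dot u (r • v) = r * dot u v := by
  simp only [dot, Pi.smul_apply, smul_eq_mul, ← ENNReal.tsum_mul_left, mul_left_comm]

variable {A u v}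

theorem mulVec_mono {B : ℕ → ℕ → ℝ≥0∞} (hAB : ∀ i j, A i j ≤ B i j) (huv : ∀ k, u k ≤ v k)
    (i : ℕ) : mulVec A u i ≤ mulVec B v i :=
  ENNReal.tsum_le_tsum fun k => mul_le_mul' (hAB i k) (huv k)

theorem dot_le_dot_right (w : ℕ → ℝ≥0∞) (huv : ∀ k, u k ≤ v k) : dot w u ≤ dot w v :=
  ENNReal.tsum_le_tsum fun k => mul_le_mul' le_rfl (huv k)

theorem mulVec_matpow_mono {B : ℕ → ℕ → ℝ≥0∞} (hAB : ∀ i j, A i j ≤ B i j) (n i : ℕ) :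
    mulVec (matpow A n) v i ≤ mulVec (matpow B n) v i := by
  induction n generalizing i with
  | zero => rw [mulVec_matpow_zero, mulVec_matpow_zero]
  | succ n ih =>
    rw [mulVec_matpow_succ, mulVec_matpow_succ]
    exact mulVec_mono hAB ih i

end MulVec

section RankOnePerturbation

variable {A M : ℕ → ℕ → ℝ≥0∞} {x y : ℕ → ℝ≥0∞}

theorem mulVec_eq_add_mul_dot (hM : ∀ i j, M i j = A i j + x i * y j) (u : ℕ → ℝ≥0∞) (i : ℕ) :
    mulVec M u i = mulVec A u i + x i * dot y u := by
  simp only [mulVec, dot, hM, add_mul, mul_assoc, ENNReal.tsum_add, ENNReal.tsum_mul_left]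

theorem mul_dot_le_mulVec (hM : ∀ i j, M i j = A i j + x i * y j) (u : ℕ → ℝ≥0∞) (i : ℕ) :
    x i * dot y u ≤ mulVec M u i :=
  (mulVec_eq_add_mul_dot hM u i).symm ▸ le_add_self

theorem sum_antidiagonal_le_mulVec_matpow_succ (hM : ∀ i j, M i j = A i j + x i * y j)
    (v : ℕ → ℝ≥0∞) (n i : ℕ) :
    ∑ kl ∈ antidiagonal n, mulVec (matpow A kl.1) x i * dot y (mulVec (matpow M kl.2) v)
      ≤ mulVec (matpow M (n + 1)) v i := by
  induction n generalizing i with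
  | zero =>
    simpa [mulVec_matpow_zero, mulVec_matpow_succ] using mul_dot_le_mulVec hM v i
  | succ n ih =>
    rw [Finset.Nat.sum_antidiagonal_succ, mulVec_matpow_succ M _ (n + 1),
      mulVec_eq_add_mul_dot hM, add_comm, mulVec_matpow_zero]
    gcongr
    simp only [mulVec_matpow_succ A]
    refine (ENNReal.sum_tsum_mul_mul _ (A i) (fun kl : ℕ × ℕ => mulVec (matpow A kl.1) x)
      _).trans_le ?_
    exact ENNReal.tsum_le_tsum fun l => mul_le_mul' le_rfl (ih l)

theorem sum_antidiagonal_le_dot_mulVec_matpow_succ (hM : ∀ i j, M i j = A i j + x i * y j)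
    (v : ℕ → ℝ≥0∞) (n : ℕ) :
    ∑ kl ∈ antidiagonal n, dot y (mulVec (matpow A kl.1) x) * dot y (mulVec (matpow M kl.2) v)
      ≤ dot y (mulVec (matpow M (n + 1)) v) := by
  refine (ENNReal.sum_tsum_mul_mul _ y (fun kl : ℕ × ℕ => mulVec (matpow A kl.1) x) _).trans_le ?_
  exact ENNReal.tsum_le_tsum fun i =>
    mul_le_mul' le_rfl (sum_antidiagonal_le_mulVec_matpow_succ hM v n i)

theorem mul_dot_mul_dot_le_mulVec_matpow (hM : ∀ i j, M i j = A i j + x i * y j)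
    (v : ℕ → ℝ≥0∞) (n r i : ℕ) :
    x i * dot y (mulVec (matpow A r) v) * dot y (mulVec (matpow M n) x)
      ≤ mulVec (matpow M (n + r + 2)) v i := by
  set β := dot y (mulVec (matpow A r) v)
  have hAM : ∀ i j, A i j ≤ M i j := fun i j => (hM i j).symm ▸ le_self_add
  have hMr : ∀ k, (β • x) k ≤ mulVec (matpow M (r + 1)) v k := fun k =>
    calc β * x k ≤ x k * dot y (mulVec (matpow M r) v) := by
          rw [mul_comm]
          exact mul_le_mul' le_rfl (dot_le_dot_right y (mulVec_matpow_mono hAM r))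
      _ ≤ mulVec (matpow M (r + 1)) v k := by
          rw [mulVec_matpow_succ]; exact mul_dot_le_mulVec hM _ k
  have hMnr : β * dot y (mulVec (matpow M n) x) ≤ dot y (mulVec (matpow M (n + r + 1)) v) := by
    rw [← dot_smul_right, ← mulVec_smul, add_assoc, mulVec_matpow_add]
    exact dot_le_dot_right y (mulVec_mono (fun _ _ => le_rfl) hMr)
  calc x i * β * dot y (mulVec (matpow M n) x) ≤ x i * dot y (mulVec (matpow M (n + r + 1)) v) := by
        rw [mul_assoc]; exact mul_le_mul' le_rfl hMnr
    _ ≤ mulVec (matpow M (n + r + 2)) v i := by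
        rw [mulVec_matpow_succ M v (n + r + 1)]; exact mul_dot_le_mulVec hM _ i

theorem tsum_pow_mul_mulVec_matpow_eq_top (hM : ∀ i j, M i j = A i j + x i * y j)
    {s : ℝ≥0∞} (hs : s ≠ 0) {v : ℕ → ℝ≥0∞} {i r : ℕ} (hxi : x i ≠ 0)
    (hv : dot y (mulVec (matpow A r) v) ≠ 0) (hx : dot y x ≠ 0)
    (hsupercritical : 1 ≤ ∑' k, dot y (mulVec (matpow A k) x) * s ^ (k + 1)) :
    ∑' n, s ^ n * mulVec (matpow M n) v i = ⊤ := by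
  have hW : ∑' n, s ^ n * dot y (mulVec (matpow M n) x) = ⊤ := by
    refine ENNReal.tsum_pow_mul_eq_top_of_renewal
      (sum_antidiagonal_le_dot_mulVec_matpow_succ hM x) ?_ hsupercritical
    rwa [mulVec_matpow_zero]
  set c := s ^ (r + 2) * (x i * dot y (mulVec (matpow A r) v))
  have hc : c ≠ 0 := mul_ne_zero (pow_ne_zero _ hs) (mul_ne_zero hxi hv)
  refine top_le_iff.mp ?_
  calc ⊤ = c * ∑' n, s ^ n * dot y (mulVec (matpow M n) x) := by rw [hW, ENNReal.mul_top hc]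
    _ = ∑' n, s ^ (n + (r + 2)) * (x i * dot y (mulVec (matpow A r) v)
          * dot y (mulVec (matpow M n) x)) := by
        rw [← ENNReal.tsum_mul_left]
        exact tsum_congr fun n => by ring
    _ ≤ ∑' n, s ^ (n + (r + 2)) * mulVec (matpow M (n + (r + 2))) v i :=
        ENNReal.tsum_le_tsum fun n =>
          mul_le_mul' le_rfl (mul_dot_mul_dot_le_mulVec_matpow hM v n r i)
    _ ≤ ∑' n, s ^ n * mulVec (matpow M n) v i :=
        ENNReal.tsum_comp_le_tsum_of_injective (add_left_injective (r + 2))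
          (fun n => s ^ n * mulVec (matpow M n) v i)

end RankOnePerturbation

theorem dot_smul_mulVec_matpow_rowSum (H : ℕ → ℕ → ℝ≥0∞) (g : ℕ → ℝ≥0∞) (m : ℝ≥0∞) (k : ℕ) :
    dot (m • g) (mulVec (matpow H k) fun i => ∑' l, H i l) = m * dseq H g (k + 1) := by
  have hrow : (fun i => ∑' l, H i l) = mulVec H fun _ => 1 := by
    funext i; simp [mulVec]
  rw [dot_smul_left, hrow, ← mulVec_matpow_succ']
  simp [dot, mulVec, dseq]

theorem lf_resolvent_divergence_general
    (H : ℕ → ℕ → ℝ≥0∞) (g : ℕ → ℝ≥0∞) (m : ℝ≥0∞)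
    (hg : ∑' j, g j = 1) (hm : 0 < m)
    (hrows : ∀ i, ∃ j, 0 < H i j)
    (hph : ∀ j, ∃ n : ℕ, 0 < ∑' i, g i * matpow H n i j)
    (s : ℝ≥0∞) (hs : 0 < s) (hfs : 1 ≤ m * fgen H g s) :
    ∀ i j, (∑' n : ℕ, s ^ n * matpow (meanM H g m) n i j) = ⊤ := by
  intro i j
  set c : ℕ → ℝ≥0∞ := fun k => ∑' l, H k l
  have hM : ∀ i j, meanM H g m i j = H i j + c i * (m • g) j := fun i j => by
    simp only [meanM, Pi.smul_apply, smul_eq_mul]; ring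
  have hc : ∀ k, c k ≠ 0 := fun k =>
    let ⟨l, hl⟩ := hrows k
    (hl.trans_le (ENNReal.le_tsum l)).ne'
  obtain ⟨r, hr⟩ := hph j
  simp_rw [← mulVec_matpow_single]
  refine tsum_pow_mul_mulVec_matpow_eq_top hM hs.ne' (hc i) (r := r) ?hv ?hx ?hsupercritical
  case hv =>
    rw [dot_smul_left]
    refine mul_ne_zero hm.ne' ?_
    simpa [dot, mulVec_matpow_single] using hr.ne'
  case hx =>
    rw [dot_smul_left]
    refine mul_ne_zero hm.ne' fun h0 => ?_
    have hg0 : ∀ k, g k = 0 := fun k =>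
      (mul_eq_zero.mp (ENNReal.tsum_eq_zero.mp h0 k)).resolve_right (hc k)
    simp [hg0] at hg
  case hsupercritical =>
    simpa only [c, dot_smul_mulVec_matpow_rowSum, fgen, mul_assoc, ENNReal.tsum_mul_left] using hfs

theorem lf_resolvent_divergence
    (H : ℕ → ℕ → ℝ≥0∞) (g : ℕ → ℝ≥0∞) (m : ℝ≥0∞)
    (hH : ∀ i, ∑' j, H i j ≤ 1) (hg : ∑' j, g j = 1) (hm : 0 < m) (hm' : m ≠ ⊤)
    (hrows : ∀ i, ∃ j, 0 < H i j)
    (hph : ∀ j, ∃ n : ℕ, 0 < ∑' i, g i * matpow H n i j)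
    (s : ℝ≥0∞) (hs : 0 < s) (hs' : s ≠ ⊤) (hfs : 1 ≤ m * fgen H g s) :
    ∀ i j, (∑' n : ℕ, s ^ n * matpow (meanM H g m) n i j) = ⊤ :=
  lf_resolvent_divergence_general H g m hg hm hrows hph s hs hfs
end

section
/- (Equation (18).) For every s > 0 with m f(s) < 1, the scalar series M(s) := Σ_{n≥0} s^n · (g M^n 1ᵗ) is finite and equals (1 + f(s))/(1 − m f(s)). -/
open scoped ENNReal BigOperators
open Filter Topology

/-! Write `a_n = g M^n 1ᵗ`. Since `M = H + m (H 1ᵗ) g` is `H` plus a rank-one term, splitting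
`M^n` at its leftmost factor in which the rank-one term is chosen gives the renewal equation
`a_n = d_n + m Σ_{k<n} a_k d_{n-k}` with `d_0 = g 1ᵗ = 1`. Multiplying by `s^n` and summing,
`A = Σ s^n a_n` solves `A = (1 + f(s)) + m f(s) A`. In `ℝ≥0∞` that equation alone does not determine
`A` (`A = ∞` also solves it), so `A` is identified with its least solution
`(1 + f(s)) Σ_k (m f(s))^k`: the partial sums obey `P_{N+1} ≤ (1 + f(s)) + m f(s) P_N`, which bounds
them by the geometric series, while every solution dominates that series. -/

open Finset

namespace ENNReal

theorem tsum_mul_tsum_eq_tsum_sum_range (f g : ℕ → ℝ≥0∞) :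
    (∑' n, f n) * ∑' n, g n = ∑' n, ∑ k ∈ range (n + 1), f k * g (n - k) := by
  have hprod : (∑' n, f n) * ∑' n, g n = ∑' p : ℕ × ℕ, f p.1 * g p.2 := by
    rw [ENNReal.tsum_prod (f := fun a b => f a * g b)]
    simp_rw [ENNReal.tsum_mul_left, ENNReal.tsum_mul_right]
  rw [hprod, ← HasAntidiagonal.sigmaAntidiagonalEquivProd.tsum_eq, ENNReal.tsum_sigma']
  refine tsum_congr fun n => ?_
  rw [← Nat.sum_antidiagonal_eq_sum_range_succ fun k l => f k * g l, ← Finset.tsum_subtype]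
  rfl

theorem tsum_sum_range_mul_eq_tsum_mul_tsum_succ (f g : ℕ → ℝ≥0∞) :
    ∑' n, ∑ k ∈ range n, f k * g (n - k) = (∑' n, f n) * ∑' n, g (n + 1) := by
  rw [ENNReal.tsum_mul_tsum_eq_tsum_sum_range, tsum_eq_zero_add' ENNReal.summable, sum_range_zero,
    zero_add]
  refine tsum_congr fun n => sum_congr rfl fun k hk => ?_
  rw [Nat.sub_add_comm (mem_range_succ_iff.1 hk)]

theorem mul_tsum_geometric_le_of_add_mul_le {a b q : ℝ≥0∞} (h : b + q * a ≤ a) :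
    b * ∑' k, q ^ k ≤ a := by
  rw [← ENNReal.tsum_mul_left]
  refine ENNReal.tsum_le_of_sum_range_le fun n => ?_
  induction n with
  | zero => simp
  | succ n ih =>
    calc ∑ k ∈ range (n + 1), b * q ^ k = b + q * ∑ k ∈ range n, b * q ^ k := by
          rw [← mul_sum, ← mul_sum, geom_sum_succ]; ring
      _ ≤ a := le_trans (by gcongr) h

theorem tsum_le_mul_tsum_geometric {x : ℕ → ℝ≥0∞} {b q : ℝ≥0∞}
    (h : ∀ n, ∑ k ∈ range (n + 1), x k ≤ b + q * ∑ k ∈ range n, x k) :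
    ∑' n, x n ≤ b * ∑' k, q ^ k := by
  refine ENNReal.tsum_le_of_sum_range_le fun n =>
    le_trans ?_ (mul_le_mul_right (ENNReal.sum_le_tsum (range n)) b)
  induction n with
  | zero => simp
  | succ n ih =>
    calc ∑ k ∈ range (n + 1), x k ≤ b + q * ∑ k ∈ range n, x k := h n
      _ ≤ b + q * (b * ∑ k ∈ range n, q ^ k) := by gcongr
      _ = b * ∑ k ∈ range (n + 1), q ^ k := by rw [geom_sum_succ]; ring

end ENNReal

section Renewal

variable {x y z : ℕ → ℝ≥0∞} {c : ℝ≥0∞}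

theorem renewal_mul_pow (h : ∀ n, x n = y n + c * ∑ k ∈ range n, x k * z (n - k)) (s : ℝ≥0∞)
    (n : ℕ) : s ^ n * x n
      = s ^ n * y n + c * ∑ k ∈ range n, (s ^ k * x k) * (s ^ (n - k) * z (n - k)) := by
  rw [h, mul_add, mul_left_comm, mul_sum]
  congr 2
  refine sum_congr rfl fun k hk => ?_
  rw [← pow_mul_pow_sub s (mem_range.1 hk).le]
  ring

variable (h : ∀ n, x n = y n + c * ∑ k ∈ range n, x k * z (n - k))
include h

theorem tsum_eq_add_mul_tsum_of_renewal :
    ∑' n, x n = ∑' n, y n + c * (∑' n, z (n + 1)) * ∑' n, x n := by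
  rw [mul_assoc, mul_comm (∑' n, z (n + 1)), ← ENNReal.tsum_sum_range_mul_eq_tsum_mul_tsum_succ,
    ← ENNReal.tsum_mul_left, ← ENNReal.tsum_add]
  exact tsum_congr h

theorem sum_range_succ_le_of_renewal (N : ℕ) :
    ∑ n ∈ range (N + 1), x n
      ≤ ∑' n, y n + c * (∑' n, z (n + 1)) * ∑ n ∈ range N, x n := by
  set xN : ℕ → ℝ≥0∞ := fun k => if k < N then x k else 0
  have hxN : ∑' k, xN k = ∑ k ∈ range N, x k := by
    rw [tsum_eq_sum (s := range N) fun k hk => if_neg (by simpa using hk)]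
    exact sum_congr rfl fun k hk => if_pos (mem_range.1 hk)
  have hconv : ∀ n ∈ range (N + 1),
      ∑ k ∈ range n, x k * z (n - k) = ∑ k ∈ range n, xN k * z (n - k) := fun n hn =>
    sum_congr rfl fun k hk => by
      have : k < N := by have := mem_range.1 hn; have := mem_range.1 hk; omega
      simp only [xN, if_pos this]
  calc ∑ n ∈ range (N + 1), x n
      = ∑ n ∈ range (N + 1), y n
          + c * ∑ n ∈ range (N + 1), ∑ k ∈ range n, xN k * z (n - k) := by
        rw [sum_congr rfl fun n _ => h n, sum_add_distrib, ← mul_sum, sum_congr rfl hconv]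
    _ ≤ ∑' n, y n + c * ∑' n, ∑ k ∈ range n, xN k * z (n - k) := by
        gcongr <;> exact ENNReal.sum_le_tsum _
    _ = ∑' n, y n + c * (∑' n, z (n + 1)) * ∑ n ∈ range N, x n := by
        rw [ENNReal.tsum_sum_range_mul_eq_tsum_mul_tsum_succ, hxN]
        ring

theorem tsum_eq_mul_tsum_geometric_of_renewal :
    ∑' n, x n = (∑' n, y n) * ∑' k, (c * ∑' n, z (n + 1)) ^ k :=
  le_antisymm (ENNReal.tsum_le_mul_tsum_geometric (sum_range_succ_le_of_renewal h))
    (ENNReal.mul_tsum_geometric_le_of_add_mul_le (tsum_eq_add_mul_tsum_of_renewal h).ge)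

end Renewal

noncomputable def matMulVec (A : ℕ → ℕ → ℝ≥0∞) : (ℕ → ℝ≥0∞) →ₗ[ℝ≥0∞] ℕ → ℝ≥0∞ where
  toFun v i := ∑' j, A i j * v j
  map_add' v w := by ext i; simp only [Pi.add_apply, mul_add, ENNReal.tsum_add]
  map_smul' a v := by
    ext i
    simp only [Pi.smul_apply, smul_eq_mul, mul_left_comm, ENNReal.tsum_mul_left, RingHom.id_apply]

noncomputable def dotVec (g : ℕ → ℝ≥0∞) : (ℕ → ℝ≥0∞) →ₗ[ℝ≥0∞] ℝ≥0∞ where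
  toFun v := ∑' i, g i * v i
  map_add' v w := by simp only [Pi.add_apply, mul_add, ENNReal.tsum_add]
  map_smul' a v := by
    simp only [Pi.smul_apply, smul_eq_mul, mul_left_comm, ENNReal.tsum_mul_left, RingHom.id_apply]

noncomputable def rowSums (A : ℕ → ℕ → ℝ≥0∞) (n : ℕ) : ℕ → ℝ≥0∞ :=
  fun i => ∑' j, matpow A n i j

theorem dseq_eq_dotVec_rowSums (H : ℕ → ℕ → ℝ≥0∞) (g : ℕ → ℝ≥0∞) (n : ℕ) :
    dseq H g n = dotVec g (rowSums H n) := rfl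

theorem rowSums_zero (A : ℕ → ℕ → ℝ≥0∞) : rowSums A 0 = 1 := by
  ext i
  simp [rowSums, matpow]

theorem rowSums_succ (A : ℕ → ℕ → ℝ≥0∞) (n : ℕ) :
    rowSums A (n + 1) = matMulVec A (rowSums A n) := by
  ext i
  simp only [rowSums, matpow, matmul, matMulVec, LinearMap.coe_mk, AddHom.coe_mk]
  rw [ENNReal.tsum_comm]
  simp_rw [ENNReal.tsum_mul_left]

theorem dseq_zero {g : ℕ → ℝ≥0∞} (hg : ∑' j, g j = 1) (H : ℕ → ℕ → ℝ≥0∞) : dseq H g 0 = 1 := by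
  simp [dseq_eq_dotVec_rowSums, rowSums_zero, dotVec, hg]

theorem matMulVec_meanM (H : ℕ → ℕ → ℝ≥0∞) (g : ℕ → ℝ≥0∞) (m : ℝ≥0∞) (v : ℕ → ℝ≥0∞) :
    matMulVec (meanM H g m) v = matMulVec H v + (m * dotVec g v) • matMulVec H 1 := by
  ext i
  simp only [matMulVec, dotVec, meanM, LinearMap.coe_mk, AddHom.coe_mk, Pi.add_apply,
    Pi.smul_apply, Pi.one_apply, smul_eq_mul, mul_one, add_mul, ENNReal.tsum_add]
  simp only [mul_assoc, ENNReal.tsum_mul_left]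
  ring

theorem rowSums_meanM (H : ℕ → ℕ → ℝ≥0∞) (g : ℕ → ℝ≥0∞) (m : ℝ≥0∞) (n : ℕ) :
    rowSums (meanM H g m) n
      = rowSums H n + m • ∑ k ∈ range n, dseq (meanM H g m) g k • rowSums H (n - k) := by
  induction n with
  | zero => simp [rowSums_zero]
  | succ n ih =>
    set a := dseq (meanM H g m) g
    have hshift : ∀ k ∈ range n,
        a k • rowSums H (n + 1 - k) = matMulVec H (a k • rowSums H (n - k)) := fun k hk => by
      rw [map_smul, ← rowSums_succ, Nat.sub_add_comm (mem_range.1 hk).le]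
    rw [rowSums_succ, matMulVec_meanM, ← dseq_eq_dotVec_rowSums, ih, map_add, map_smul, map_sum,
      sum_range_succ, sum_congr rfl hshift, ← rowSums_succ, Nat.add_sub_cancel_left,
      rowSums_succ H 0, rowSums_zero, smul_add, smul_smul, add_assoc]

theorem dseq_meanM (H : ℕ → ℕ → ℝ≥0∞) (g : ℕ → ℝ≥0∞) (m : ℝ≥0∞) (n : ℕ) :
    dseq (meanM H g m) g n
      = dseq H g n + m * ∑ k ∈ range n, dseq (meanM H g m) g k * dseq H g (n - k) := by
  rw [dseq_eq_dotVec_rowSums, rowSums_meanM, map_add, map_smul, map_sum]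
  simp only [map_smul, smul_eq_mul, dseq_eq_dotVec_rowSums]

theorem lf_scalar_resolvent_general
    (H : ℕ → ℕ → ℝ≥0∞) (g : ℕ → ℝ≥0∞) (m : ℝ≥0∞)
    (hg : ∑' j, g j = 1) (hm : 0 < m)
    (s : ℝ≥0∞) (hfs : m * fgen H g s < 1) :
    (∑' n : ℕ, s ^ n * ∑' i, g i * ∑' j, matpow (meanM H g m) n i j) < ⊤ ∧
    (∑' n : ℕ, s ^ n * ∑' i, g i * ∑' j, matpow (meanM H g m) n i j)
      = (1 + fgen H g s) / (1 - m * fgen H g s) := by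
  have hf : fgen H g s ≠ ⊤ := fun h => by simp [h, ENNReal.mul_top hm.ne'] at hfs
  have hz : ∑' n, s ^ (n + 1) * dseq H g (n + 1) = fgen H g s := by
    simp only [fgen, mul_comm]
  have hy : ∑' n, s ^ n * dseq H g n = 1 + fgen H g s := by
    rw [tsum_eq_zero_add' ENNReal.summable, pow_zero, one_mul, dseq_zero hg, hz]
  have key := tsum_eq_mul_tsum_geometric_of_renewal
    (x := fun n => s ^ n * dseq (meanM H g m) g n) (y := fun n => s ^ n * dseq H g n)
    (z := fun n => s ^ n * dseq H g n) (renewal_mul_pow (dseq_meanM H g m) s)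
  rw [hy, hz, ENNReal.tsum_geometric, ← div_eq_mul_inv] at key
  exact ⟨key ▸ ENNReal.div_lt_top (by finiteness) (tsub_pos_of_lt hfs).ne', key⟩

theorem lf_scalar_resolvent
    (H : ℕ → ℕ → ℝ≥0∞) (g : ℕ → ℝ≥0∞) (m : ℝ≥0∞)
    (hH : ∀ i, ∑' j, H i j ≤ 1) (hg : ∑' j, g j = 1) (hm : 0 < m) (hm' : m ≠ ⊤)
    (s : ℝ≥0∞) (hs : 0 < s) (hs' : s ≠ ⊤) (hfs : m * fgen H g s < 1) :
    (∑' n : ℕ, s ^ n * ∑' i, g i * ∑' j, matpow (meanM H g m) n i j) < ⊤ ∧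
    (∑' n : ℕ, s ^ n * ∑' i, g i * ∑' j, matpow (meanM H g m) n i j)
      = (1 + fgen H g s) / (1 - m * fgen H g s) :=
  lf_scalar_resolvent_general H g m hg hm s hfs
end

section
/- (Theorem 2, irreducibility criterion.) The mean matrix M is irreducible — i.e. for every pair of indices i,j there exists n ≥ 1 with (M^n)_{ij} > 0 — if and only if there are no phantom types and H contains no zero rows. -/
open scoped ENNReal BigOperators
open Filter Topology

lemma matpow_le_matpow {A B : ℕ → ℕ → ℝ≥0∞} (h : ∀ i j, A i j ≤ B i j) :
    ∀ n i j, matpow A n i j ≤ matpow B n i j := by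
  intro n
  induction n with
  | zero => intro i j; exact le_rfl
  | succ n ih =>
    intro i j
    exact ENNReal.tsum_le_tsum fun k => mul_le_mul' (h i k) (ih k j)

theorem lf_irreducibility_criterion
    (H : ℕ → ℕ → ℝ≥0∞) (g : ℕ → ℝ≥0∞) (m : ℝ≥0∞)
    (hH : ∀ i, ∑' j, H i j ≤ 1) (hg : ∑' j, g j = 1) (hm : 0 < m) (hm' : m ≠ ⊤) :
    (∀ i j, ∃ n : ℕ, 1 ≤ n ∧ 0 < matpow (meanM H g m) n i j) ↔
      ((∀ j, ∃ n : ℕ, 0 < ∑' i, g i * matpow H n i j) ∧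
       (∀ i, ∃ j, 0 < H i j)) := by
  constructor
  · intro hirr
    constructor
    · intro j
      by_contra hcon
      push_neg at hcon
      have hz : ∀ n, ∑' i, g i * matpow H n i j = 0 :=
        fun n => le_antisymm (hcon n) bot_le
      have hterm : ∀ n i, g i * matpow H n i j = 0 := by
        intro n i
        exact ENNReal.tsum_eq_zero.mp (hz n) i
      have hMH : ∀ n i, matpow (meanM H g m) n i j = matpow H n i j := by
        intro n
        induction n with
        | zero => intro i; rfl
        | succ n ih =>
          intro i
          show (∑' k, meanM H g m i k * matpow (meanM H g m) n k j) = _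
          have key : ∀ k, meanM H g m i k * matpow (meanM H g m) n k j
              = H i k * matpow H n k j := by
            intro k
            rw [ih k]
            unfold meanM
            rw [add_mul, mul_assoc, hterm n k, mul_zero, add_zero]
          exact tsum_congr key
      obtain ⟨i0, hi0⟩ : ∃ i, 0 < g i := by
        by_contra h
        push_neg at h
        have hgz : ∀ i, g i = 0 := fun i => le_antisymm (h i) bot_le
        simp [hgz] at hg
      obtain ⟨n, hn1, hpos⟩ := hirr i0 j
      rw [hMH n i0] at hpos
      have hposmul : 0 < g i0 * matpow H n i0 j :=
        ENNReal.mul_pos hi0.ne' hpos.ne'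
      rw [hterm n i0] at hposmul
      exact lt_irrefl 0 hposmul
    · intro i
      by_contra h
      push_neg at h
      have hrow : ∀ j, H i j = 0 := fun j => le_antisymm (h j) bot_le
      have hMzero : ∀ k, meanM H g m i k = 0 := by
        intro k
        unfold meanM
        simp [hrow]
      obtain ⟨n, hn1, hpos⟩ := hirr i i
      obtain ⟨n', rfl⟩ := Nat.exists_eq_add_of_le hn1
      have hzero : matpow (meanM H g m) (1 + n') i i = 0 := by
        rw [add_comm]
        show (∑' k, meanM H g m i k * matpow (meanM H g m) n' k i) = 0
        simp [hMzero]
      rw [hzero] at hpos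
      exact lt_irrefl 0 hpos
  · rintro ⟨hph, hrow⟩
    intro i j
    obtain ⟨n, hn⟩ := hph j
    obtain ⟨k, hk⟩ : ∃ k, 0 < g k * matpow H n k j := by
      by_contra h
      push_neg at h
      have hzz : ∀ k, g k * matpow H n k j = 0 := fun k => le_antisymm (h k) bot_le
      rw [ENNReal.tsum_eq_zero.mpr hzz] at hn
      exact lt_irrefl 0 hn
    have hgk : g k ≠ 0 := by
      intro h; rw [h, zero_mul] at hk; exact lt_irrefl 0 hk
    have hHnk : matpow H n k j ≠ 0 := by
      intro h; rw [h, mul_zero] at hk; exact lt_irrefl 0 hk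
    obtain ⟨l, hl⟩ := hrow i
    have hS : 0 < ∑' l, H i l := lt_of_lt_of_le hl (ENNReal.le_tsum l)
    have hMik : 0 < meanM H g m i k := by
      have h1 : 0 < m * (∑' l, H i l) * g k :=
        ENNReal.mul_pos (ENNReal.mul_pos hm.ne' hS.ne').ne' hgk
      exact lt_of_lt_of_le h1 le_add_self
    have hMnk : 0 < matpow (meanM H g m) n k j := by
      refine lt_of_lt_of_le (pos_iff_ne_zero.mpr hHnk) (matpow_le_matpow ?_ n k j)
      intro a b
      exact le_self_add
    refine ⟨n + 1, Nat.le_add_left 1 n, ?_⟩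
    have hle : meanM H g m i k * matpow (meanM H g m) n k j
        ≤ matpow (meanM H g m) (n + 1) i j := ENNReal.le_tsum k
    exact lt_of_lt_of_le (ENNReal.mul_pos hMik.ne' hMnk.ne') hle
end
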